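/- arXiv:2308.16136 — 4 statements merged into one kernel-verified Lean document; each statement's English description precedes it below -/
import Mathlib

section
/- Let Γ be a finitely generated group acting by homeomorphisms on a compact metrizable topological space X. Then there exists a metric d on X inducing the given topology of X such that for every γ ∈ Γ, the map x ↦ γ·x is bi-Lipschitz with respect to d (i.e., Lipschitz with a Lipschitz inverse). -/
/-!
Fix a compatible metric `d` on `X` and a finite symmetric generating set `T` of `Γ`, let
`dₙ(x, y) = max_{γ ∈ Tⁿ} d(γx, γy)` and `D = ∑ 2⁻ⁿ dₙ`; the series converges since `X` is
bounded. As `dₙ(sx, sy) ≤ dₙ₊₁(x, y)` for `s ∈ T`, every generator is `2`-Lipschitz for `D`,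
hence every element of `Γ` is Lipschitz, and bi-Lipschitz together with its inverse. `D ≥ d`
is a metric, continuous as a uniform limit of continuous functions, so the identity from `X`
to `(X, D)` is a continuous bijection from a compact space onto a Hausdorff one, and `D`
induces the topology of `X`.
-/

open Metric Set Topology
open scoped Pointwise NNReal

theorem TopologicalSpace.eq_of_continuous_id_compact_to_t2 {X : Type*} {t t' : TopologicalSpace X}
    (hc : @CompactSpace X t) (h2 : @T2Space X t') (h : Continuous[t, t'] id) : t = t' :=
  le_antisymm (continuous_id_iff_le.1 h) <| continuous_id_iff_le.1
    (@Continuous.continuous_symm_of_equiv_compact_to_t2 X X t t' hc h2 (Equiv.refl X) h)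

theorem MetricSpace.toTopologicalSpace_eq_of_continuous_dist {X : Type*} [t : TopologicalSpace X]
    [CompactSpace X] (m : MetricSpace X) (h : Continuous fun p : X × X => m.dist p.1 p.2) :
    m.toUniformSpace.toTopologicalSpace = t :=
  (TopologicalSpace.eq_of_continuous_id_compact_to_t2 ‹_› (by let _ := m; infer_instance)
    ((@continuous_iff_continuous_dist X X m.toPseudoMetricSpace t id).2 h)).symm

theorem exists_lipschitzWith_smul_of_closure_eq_top {M X : Type*} [Monoid M] [MulAction M X]
    [PseudoEMetricSpace X] {T : Set M} (hT : Submonoid.closure T = ⊤)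
    (h : ∀ s ∈ T, ∃ K, LipschitzWith K fun x : X => s • x) (γ : M) :
    ∃ K, LipschitzWith K fun x : X => γ • x := by
  induction (hT ▸ Submonoid.mem_top γ : γ ∈ Submonoid.closure T) using
    Submonoid.closure_induction with
  | mem s hs => exact h s hs
  | one => exact ⟨1, by simp only [one_smul]; exact LipschitzWith.id⟩
  | mul a b _ _ ha hb =>
    obtain ⟨K, hK⟩ := ha
    obtain ⟨K', hK'⟩ := hb
    exact ⟨K * K', by simp only [mul_smul]; exact hK.comp hK'⟩

theorem LipschitzWith.exists_biLipschitz_bound {X Y : Type*} [PseudoMetricSpace X]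
    [PseudoMetricSpace Y] {f : X → Y} {g : Y → X} {K K' : ℝ≥0} (hf : LipschitzWith K f)
    (hg : LipschitzWith K' g) (hgf : Function.LeftInverse g f) :
    ∃ C : ℝ, 1 ≤ C ∧
      ∀ x y, C⁻¹ * dist x y ≤ dist (f x) (f y) ∧ dist (f x) (f y) ≤ C * dist x y := by
  have hanti : AntilipschitzWith K' f := hg.to_rightInverse hgf
  refine ⟨max 1 (max K K'), le_max_left _ _, fun x y => ⟨?_, ?_⟩⟩
  · rw [inv_mul_le_iff₀ (by positivity)]
    calc dist x y ≤ K' * dist (f x) (f y) := hanti.le_mul_dist x y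
      _ ≤ _ := by gcongr; exact (le_max_right _ _).trans (le_max_right _ _)
  · calc dist (f x) (f y) ≤ K * dist x y := hf.dist_le_mul x y
      _ ≤ _ := by gcongr; exact (le_max_left _ _).trans (le_max_right _ _)

section OrbitDist

variable {Γ X : Type*} [Monoid Γ] [DecidableEq Γ] [MulAction Γ X] [PseudoMetricSpace X]
  (T : Finset Γ)

-- taken in `ℝ≥0`, whose `⊥ = 0` makes the supremum over an empty `T ^ n` harmless
noncomputable def supDist (n : ℕ) (x y : X) : ℝ :=
  ((T ^ n).sup fun γ => nndist (γ • x) (γ • y) : ℝ≥0)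

variable {T}

theorem supDist_nonneg (n : ℕ) (x y : X) : 0 ≤ supDist T n x y := NNReal.coe_nonneg _

theorem dist_smul_le_supDist {n : ℕ} {γ : Γ} (hγ : γ ∈ T ^ n) (x y : X) :
    dist (γ • x) (γ • y) ≤ supDist T n x y :=
  NNReal.coe_le_coe.2 (Finset.le_sup (f := fun γ => nndist (γ • x) (γ • y)) hγ)

theorem supDist_le {n : ℕ} {x y : X} {c : ℝ} (hc : 0 ≤ c)
    (h : ∀ γ ∈ T ^ n, dist (γ • x) (γ • y) ≤ c) : supDist T n x y ≤ c := by
  rw [supDist, ← NNReal.coe_mk c hc, NNReal.coe_le_coe]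
  exact Finset.sup_le fun γ hγ => NNReal.coe_le_coe.1 (h γ hγ)

variable (T)

theorem supDist_zero (x y : X) : supDist T 0 x y = dist x y := by simp [supDist]

theorem supDist_self (n : ℕ) (x : X) : supDist T n x x = 0 := by simp [supDist]

theorem supDist_comm (n : ℕ) (x y : X) : supDist T n x y = supDist T n y x := by
  simp only [supDist, nndist_comm]

theorem supDist_triangle (n : ℕ) (x y z : X) :
    supDist T n x z ≤ supDist T n x y + supDist T n y z :=
  supDist_le (add_nonneg (supDist_nonneg _ _ _) (supDist_nonneg _ _ _)) fun _ hγ =>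
    (dist_triangle _ _ _).trans
      (add_le_add (dist_smul_le_supDist hγ _ _) (dist_smul_le_supDist hγ _ _))

theorem supDist_le_diam [BoundedSpace X] (n : ℕ) (x y : X) :
    supDist T n x y ≤ diam (univ : Set X) :=
  supDist_le diam_nonneg fun _ _ =>
    dist_le_diam_of_mem (Bornology.isBounded_univ.2 ‹_›) trivial trivial

theorem supDist_smul_le {s : Γ} (hs : s ∈ T) (n : ℕ) (x y : X) :
    supDist T n (s • x) (s • y) ≤ supDist T (n + 1) x y :=
  supDist_le (supDist_nonneg _ _ _) fun γ hγ => by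
    have h := dist_smul_le_supDist (pow_succ T n ▸ Finset.mul_mem_mul hγ hs) x y
    rwa [mul_smul, mul_smul] at h

theorem continuous_supDist [ContinuousConstSMul Γ X] (n : ℕ) :
    Continuous fun p : X × X => supDist T n p.1 p.2 :=
  NNReal.continuous_coe.comp <| Continuous.finset_sup_apply fun γ _ =>
    (continuous_fst.const_smul γ).nndist (continuous_snd.const_smul γ)

noncomputable def orbitDist (x y : X) : ℝ := ∑' n : ℕ, (1 / 2 : ℝ) ^ n * supDist T n x y

theorem orbitDist_self (x : X) : orbitDist T x x = 0 := by simp [orbitDist, supDist_self]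

theorem orbitDist_comm (x y : X) : orbitDist T x y = orbitDist T y x := by
  simp only [orbitDist, supDist_comm T _ x y]

variable [BoundedSpace X]

theorem summable_orbitDist (x y : X) :
    Summable fun n : ℕ => (1 / 2 : ℝ) ^ n * supDist T n x y :=
  Summable.of_nonneg_of_le (fun n => mul_nonneg (by positivity) (supDist_nonneg n x y))
    (fun n => mul_le_mul_of_nonneg_left (supDist_le_diam T n x y) (by positivity))
    (summable_geometric_two.mul_right (diam (univ : Set X)))

theorem orbitDist_triangle (x y z : X) :
    orbitDist T x z ≤ orbitDist T x y + orbitDist T y z := by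
  rw [orbitDist, orbitDist, orbitDist,
    ← (summable_orbitDist T x y).tsum_add (summable_orbitDist T y z)]
  refine (summable_orbitDist T x z).tsum_le_tsum (fun n => ?_)
    ((summable_orbitDist T x y).add (summable_orbitDist T y z))
  rw [← mul_add]
  gcongr
  exact supDist_triangle T n x y z

theorem dist_le_orbitDist (x y : X) : dist x y ≤ orbitDist T x y := by
  have h := (summable_orbitDist T x y).le_tsum 0
    fun n _ => mul_nonneg (by positivity) (supDist_nonneg n x y)
  rwa [pow_zero, one_mul, supDist_zero] at h

theorem orbitDist_smul_le {s : Γ} (hs : s ∈ T) (x y : X) :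
    orbitDist T (s • x) (s • y) ≤ 2 * orbitDist T x y := by
  set a : ℕ → ℝ := fun n => (1 / 2 : ℝ) ^ n * supDist T n x y
  have hshift : Summable fun n => 2 * a (n + 1) :=
    ((summable_nat_add_iff 1).2 (summable_orbitDist T x y)).mul_left 2
  calc orbitDist T (s • x) (s • y) ≤ ∑' n, 2 * a (n + 1) := by
        refine (summable_orbitDist T _ _).tsum_le_tsum (fun n => ?_) hshift
        calc (1 / 2 : ℝ) ^ n * supDist T n (s • x) (s • y)
            ≤ (1 / 2 : ℝ) ^ n * supDist T (n + 1) x y := by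
              gcongr; exact supDist_smul_le T hs n x y
          _ = 2 * a (n + 1) := by simp only [a]; ring
    _ = 2 * ∑' n, a (n + 1) := tsum_mul_left
    _ ≤ 2 * orbitDist T x y := by
        rw [orbitDist, (summable_orbitDist T x y).tsum_eq_zero_add]
        gcongr
        exact le_add_of_nonneg_left (mul_nonneg (by positivity) (supDist_nonneg 0 x y))

theorem continuous_orbitDist [ContinuousConstSMul Γ X] :
    Continuous fun p : X × X => orbitDist T p.1 p.2 :=
  continuous_tsum (fun n => continuous_const.mul (continuous_supDist T n))
    (summable_geometric_two.mul_right (diam (univ : Set X))) fun n p => by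
      rw [Real.norm_of_nonneg (mul_nonneg (by positivity) (supDist_nonneg n _ _))]
      gcongr
      exact supDist_le_diam T n p.1 p.2

end OrbitDist

noncomputable abbrev orbitMetricSpace {Γ X : Type*} [Monoid Γ] [DecidableEq Γ] [MulAction Γ X]
    [MetricSpace X] [BoundedSpace X] (T : Finset Γ) : MetricSpace X where
  dist := orbitDist T
  dist_self := orbitDist_self T
  dist_comm := orbitDist_comm T
  dist_triangle := orbitDist_triangle T
  eq_of_dist_eq_zero {x y} h := dist_le_zero.1 ((dist_le_orbitDist T x y).trans h.le)

theorem fg_action_biLipschitz_metric_general {Γ X : Type*} [Group Γ] [Group.FG Γ]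
    [tX : TopologicalSpace X] [CompactSpace X] [TopologicalSpace.MetrizableSpace X]
    [MulAction Γ X]
    (hcont : ∀ γ : Γ, Continuous fun x : X => γ • x) :
    ∃ m : MetricSpace X,
      m.toUniformSpace.toTopologicalSpace = tX ∧
      ∀ γ : Γ, ∃ C : ℝ, 1 ≤ C ∧ ∀ x y : X,
        C⁻¹ * m.dist x y ≤ m.dist (γ • x) (γ • y) ∧
        m.dist (γ • x) (γ • y) ≤ C * m.dist x y := by
  classical
  let _ := TopologicalSpace.metrizableSpaceMetric X
  have : ContinuousConstSMul Γ X := ⟨hcont⟩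
  obtain ⟨S, hS⟩ := Group.FG.out (G := Γ)
  set T : Finset Γ := S ∪ S⁻¹
  have hT : Submonoid.closure (T : Set Γ) = ⊤ := by
    rw [Finset.coe_union, Finset.coe_inv, ← Subgroup.closure_toSubmonoid, hS,
      Subgroup.top_toSubmonoid]
  -- stated while `orbitDist` is still built on the metric of `metrizableSpaceMetric`
  have hsmul : ∀ s ∈ T, ∀ x y : X, orbitDist T (s • x) (s • y) ≤ 2 * orbitDist T x y :=
    fun s hs => orbitDist_smul_le T hs
  refine ⟨orbitMetricSpace T,
    (orbitMetricSpace T).toTopologicalSpace_eq_of_continuous_dist (continuous_orbitDist T),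
    fun γ => ?_⟩
  let _ : MetricSpace X := orbitMetricSpace T
  have hlip : ∀ γ : Γ, ∃ K, LipschitzWith K fun x : X => γ • x :=
    exists_lipschitzWith_smul_of_closure_eq_top hT fun s hs =>
      ⟨2, LipschitzWith.of_dist_le_mul (hsmul s hs)⟩
  obtain ⟨K, hK⟩ := hlip γ
  obtain ⟨K', hK'⟩ := hlip γ⁻¹
  exact hK.exists_biLipschitz_bound hK' (inv_smul_smul γ)

/-- **Theorem (Hamenstädt).** Let `Γ` be a finitely generated group acting by
homeomorphisms on a compact metrizable space `X`. Then there is a metric on `X`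
defining the original topology such that the action is by bi-Lipschitz
transformations. -/
theorem fg_action_biLipschitz_metric {Γ X : Type*} [Group Γ] [Group.FG Γ]
    [tX : TopologicalSpace X] [CompactSpace X] [TopologicalSpace.MetrizableSpace X]
    [Nonempty X] [MulAction Γ X]
    (hcont : ∀ γ : Γ, Continuous fun x : X => γ • x) :
    ∃ m : MetricSpace X,
      m.toUniformSpace.toTopologicalSpace = tX ∧
      ∀ γ : Γ, ∃ C : ℝ, 1 ≤ C ∧ ∀ x y : X,
        C⁻¹ * m.dist x y ≤ m.dist (γ • x) (γ • y) ∧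
        m.dist (γ • x) (γ • y) ≤ C * m.dist x y :=
  fg_action_biLipschitz_metric_general (tX := tX) hcont
end

section
/- With Γ, S, d_S, (X, δ̂), s, and the metric δ_e as below, every ψ ∈ Γ acts on (X, δ_e) as a bi-Lipschitz transformation: for all x, y ∈ X, e^{−s·|ψ|_S} · δ_e(x,y) ≤ δ_e(ψ·x, ψ·y) ≤ e^{s·|ψ|_S} · δ_e(x,y). -/
/-- The word length of `g` with respect to a generating set `S`. -/
noncomputable def wordLength {Γ : Type*} [Group Γ] (S : Set Γ) (g : Γ) : ℕ :=
  sInf {n : ℕ | ∃ l : List Γ, (∀ x ∈ l, x ∈ S) ∧ l.length = n ∧ l.prod = g}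

/-- The distance `δ_p(x,y) = ∑_{ψ ∈ Γ} e^{-s d_S(p,ψ)} δ̂(ψ⁻¹ x, ψ⁻¹ y)`. -/
noncomputable def deltaP {Γ X : Type*} [Group Γ] [MetricSpace X] [MulAction Γ X]
    (S : Set Γ) (s : ℝ) (p : Γ) (x y : X) : ℝ :=
  ∑' ψ : Γ, Real.exp (-s * (wordLength S (p⁻¹ * ψ) : ℝ)) * dist (ψ⁻¹ • x) (ψ⁻¹ • y)

/-!
Substituting `ψ ↦ γψ` in the series shows `δ_e(γx, γy) = δ_{γ⁻¹}(x, y)`, so it suffices to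
compare `δ_p` and `δ_q` for two base points. Their weights `e^{-s d_S(p, ψ)}` and
`e^{-s d_S(q, ψ)}` differ termwise by a factor at most `e^{s d_S(p, q)}`, by the triangle
inequality for the word metric; boundedness of `X` makes all the series converge.
-/

theorem tsum_le_mul_tsum_of_le {ι : Type*} {f g : ι → ℝ} {c : ℝ} (hf : 0 ≤ f)
    (hg : Summable g) (h : ∀ i, f i ≤ c * g i) : ∑' i, f i ≤ c * ∑' i, g i := by
  have hcg : Summable fun i => c * g i := hg.mul_left c
  calc ∑' i, f i ≤ ∑' i, c * g i := (hcg.of_nonneg_of_le hf h).tsum_le_tsum h hcg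
    _ = c * ∑' i, g i := tsum_mul_left

section WordLength

variable {Γ : Type*} [Group Γ] {S : Set Γ}

theorem exists_list_prod_eq (hsym : ∀ x ∈ S, x⁻¹ ∈ S) (hgen : Subgroup.closure S = ⊤)
    (g : Γ) : ∃ l : List Γ, (∀ x ∈ l, x ∈ S) ∧ l.prod = g := by
  have hg : g ∈ (Subgroup.closure S).toSubmonoid := by simp [hgen]
  have hS : S ∪ S⁻¹ = S := Set.union_eq_left.2 fun x hx => by simpa using hsym _ hx
  rw [Subgroup.closure_toSubmonoid, hS] at hg
  exact Submonoid.exists_list_of_mem_closure hg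

theorem exists_list_length_eq_wordLength (hsym : ∀ x ∈ S, x⁻¹ ∈ S)
    (hgen : Subgroup.closure S = ⊤) (g : Γ) :
    ∃ l : List Γ, (∀ x ∈ l, x ∈ S) ∧ l.length = wordLength S g ∧ l.prod = g := by
  obtain ⟨l, hlS, hl⟩ := exists_list_prod_eq hsym hgen g
  have hne : {n | ∃ l : List Γ, (∀ x ∈ l, x ∈ S) ∧ l.length = n ∧ l.prod = g}.Nonempty :=
    ⟨l.length, l, hlS, rfl, hl⟩
  exact Nat.sInf_mem hne

theorem wordLength_prod_le_length {l : List Γ} (hl : ∀ x ∈ l, x ∈ S) :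
    wordLength S l.prod ≤ l.length :=
  Nat.sInf_le ⟨l, hl, rfl, rfl⟩

theorem wordLength_mul_le (hsym : ∀ x ∈ S, x⁻¹ ∈ S) (hgen : Subgroup.closure S = ⊤)
    (a b : Γ) : wordLength S (a * b) ≤ wordLength S a + wordLength S b := by
  obtain ⟨l₁, hl₁S, hl₁, rfl⟩ := exists_list_length_eq_wordLength hsym hgen a
  obtain ⟨l₂, hl₂S, hl₂, rfl⟩ := exists_list_length_eq_wordLength hsym hgen b
  have hS : ∀ x ∈ l₁ ++ l₂, x ∈ S := by
    simpa only [List.mem_append, or_imp, forall_and] using And.intro hl₁S hl₂S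
  simpa [hl₁, hl₂] using wordLength_prod_le_length hS

theorem wordLength_inv_le (hsym : ∀ x ∈ S, x⁻¹ ∈ S) (hgen : Subgroup.closure S = ⊤)
    (a : Γ) : wordLength S a⁻¹ ≤ wordLength S a := by
  obtain ⟨l, hlS, hl, rfl⟩ := exists_list_length_eq_wordLength hsym hgen a
  have hS : ∀ x ∈ (l.map fun x => x⁻¹).reverse, x ∈ S := by
    simpa using fun x hx => by simpa using hsym _ (hlS _ hx)
  simpa [← List.prod_inv_reverse, hl] using wordLength_prod_le_length hS

theorem wordLength_inv (hsym : ∀ x ∈ S, x⁻¹ ∈ S) (hgen : Subgroup.closure S = ⊤) (a : Γ) :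
    wordLength S a⁻¹ = wordLength S a :=
  (wordLength_inv_le hsym hgen a).antisymm (by simpa using wordLength_inv_le hsym hgen a⁻¹)

end WordLength

section DeltaP

variable {Γ X : Type*} [Group Γ] [MetricSpace X] [MulAction Γ X] {S : Set Γ} {s : ℝ}

theorem deltaP_smul (p γ : Γ) (x y : X) :
    deltaP S s p (γ • x) (γ • y) = deltaP S s (γ⁻¹ * p) x y := by
  rw [deltaP, ← (Equiv.mulLeft γ).tsum_eq]
  refine tsum_congr fun ψ => ?_
  simp only [Equiv.coe_mulLeft, mul_inv_rev, inv_inv, mul_assoc, mul_smul, inv_smul_smul]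

theorem summable_deltaP_summand [BoundedSpace X]
    (hsum : Summable fun ψ : Γ => Real.exp (-s * (wordLength S ψ : ℝ))) (p : Γ) (x y : X) :
    Summable fun ψ : Γ =>
      Real.exp (-s * (wordLength S (p⁻¹ * ψ) : ℝ)) * dist (ψ⁻¹ • x) (ψ⁻¹ • y) := by
  have hdist (a b : X) : dist a b ≤ Metric.diam (Set.univ : Set X) :=
    Metric.dist_le_diam_of_mem (Bornology.IsBounded.all _) (Set.mem_univ a) (Set.mem_univ b)
  have hshift : Summable fun ψ : Γ => Real.exp (-s * (wordLength S (p⁻¹ * ψ) : ℝ)) :=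
    (Equiv.mulLeft p⁻¹).summable_iff.2 hsum
  refine (hshift.mul_right (Metric.diam (Set.univ : Set X))).of_nonneg_of_le
    (fun ψ => by positivity) fun ψ => ?_
  exact mul_le_mul_of_nonneg_left (hdist _ _) (Real.exp_pos _).le

theorem exp_neg_wordLength_le (hsym : ∀ x ∈ S, x⁻¹ ∈ S) (hgen : Subgroup.closure S = ⊤)
    (hs : 0 ≤ s) (p q ψ : Γ) :
    Real.exp (-s * (wordLength S (p⁻¹ * ψ) : ℝ)) ≤
      Real.exp (s * (wordLength S (q⁻¹ * p) : ℝ)) *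
        Real.exp (-s * (wordLength S (q⁻¹ * ψ) : ℝ)) := by
  have htri :
      (wordLength S (q⁻¹ * ψ) : ℝ) ≤ wordLength S (q⁻¹ * p) + wordLength S (p⁻¹ * ψ) := by
    have := wordLength_mul_le hsym hgen (q⁻¹ * p) (p⁻¹ * ψ)
    rw [mul_assoc, mul_inv_cancel_left] at this
    exact_mod_cast this
  rw [← Real.exp_add, Real.exp_le_exp]
  nlinarith

theorem deltaP_le_exp_mul_deltaP [BoundedSpace X] (hsym : ∀ x ∈ S, x⁻¹ ∈ S)
    (hgen : Subgroup.closure S = ⊤) (hs : 0 ≤ s)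
    (hsum : Summable fun ψ : Γ => Real.exp (-s * (wordLength S ψ : ℝ))) (p q : Γ) (x y : X) :
    deltaP S s p x y ≤ Real.exp (s * (wordLength S (q⁻¹ * p) : ℝ)) * deltaP S s q x y := by
  refine tsum_le_mul_tsum_of_le (fun ψ => by positivity) (summable_deltaP_summand hsum q x y)
    fun ψ => ?_
  rw [← mul_assoc]
  exact mul_le_mul_of_nonneg_right (exp_neg_wordLength_le hsym hgen hs p q ψ) dist_nonneg

end DeltaP

theorem deltaE_action_biLipschitz_general {Γ X : Type*} [Group Γ]
    (S : Finset Γ) (hsym : ∀ x ∈ S, x⁻¹ ∈ S)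
    (hgen : Subgroup.closure (S : Set Γ) = ⊤)
    [MetricSpace X] [CompactSpace X] [MulAction Γ X]
    (s : ℝ) (hs : 0 < s)
    (hsum : Summable fun ψ : Γ => Real.exp (-s * (wordLength (S : Set Γ) ψ : ℝ))) :
    ∀ (ψ : Γ) (x y : X),
      Real.exp (-s * (wordLength (S : Set Γ) ψ : ℝ)) * deltaP (S : Set Γ) s 1 x y ≤
        deltaP (S : Set Γ) s 1 (ψ • x) (ψ • y) ∧
      deltaP (S : Set Γ) s 1 (ψ • x) (ψ • y) ≤
        Real.exp (s * (wordLength (S : Set Γ) ψ : ℝ)) * deltaP (S : Set Γ) s 1 x y := by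
  intro ψ x y
  have hlower := deltaP_le_exp_mul_deltaP hsym hgen hs.le hsum 1 ψ⁻¹ x y
  have hupper := deltaP_le_exp_mul_deltaP hsym hgen hs.le hsum ψ⁻¹ 1 x y
  rw [inv_inv, mul_one] at hlower
  rw [inv_one, one_mul, wordLength_inv hsym hgen] at hupper
  rw [deltaP_smul, mul_one, neg_mul, Real.exp_neg, inv_mul_le_iff₀ (Real.exp_pos _)]
  exact ⟨hlower, hupper⟩

/-- Every `ψ ∈ Γ` acts on `(X, δ_e)` as a bi-Lipschitz transformation:
`e^{-s |ψ|_S} δ_e(x,y) ≤ δ_e(ψ x, ψ y) ≤ e^{s |ψ|_S} δ_e(x,y)`. -/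
theorem deltaE_action_biLipschitz {Γ X : Type*} [Group Γ]
    (S : Finset Γ) (hsym : ∀ x ∈ S, x⁻¹ ∈ S)
    (hgen : Subgroup.closure (S : Set Γ) = ⊤)
    [MetricSpace X] [CompactSpace X] [MulAction Γ X]
    (hcont : ∀ γ : Γ, Continuous fun x : X => γ • x)
    (s : ℝ) (hs : 0 < s)
    (hsum : Summable fun ψ : Γ => Real.exp (-s * (wordLength (S : Set Γ) ψ : ℝ))) :
    ∀ (ψ : Γ) (x y : X),
      Real.exp (-s * (wordLength (S : Set Γ) ψ : ℝ)) * deltaP (S : Set Γ) s 1 x y ≤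
        deltaP (S : Set Γ) s 1 (ψ • x) (ψ • y) ∧
      deltaP (S : Set Γ) s 1 (ψ • x) (ψ • y) ≤
        Real.exp (s * (wordLength (S : Set Γ) ψ : ℝ)) * deltaP (S : Set Γ) s 1 x y :=
  deltaE_action_biLipschitz_general S hsym hgen s hs hsum
end

section
/- With Γ, S, d_S, (X, δ̂), s, and the metric δ_e as below, the metric δ_e induces the same topology on X as δ̂. Moreover δ_e(x,y) ≥ δ̂(x,y) for all x,y ∈ X, so the identity map (X, δ_e) → (X, δ̂) is 1-Lipschitz. -/
open Metric

lemma dist_le_diam_univ {X : Type*} [PseudoMetricSpace X] [BoundedSpace X] (x y : X) :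
    dist x y ≤ diam (Set.univ : Set X) :=
  dist_le_diam_of_mem (Bornology.isBounded_univ.mpr ‹_›) trivial trivial

section wordLength

variable {Γ : Type*} [Group Γ] (S : Set Γ) (s : ℝ)

lemma wordLength_one : wordLength S 1 = 0 :=
  Nat.sInf_eq_zero.mpr <| Or.inl ⟨[], by simp⟩

lemma summable_exp_wordLength_mul_left (p : Γ)
    (hsum : Summable fun ψ : Γ => Real.exp (-s * (wordLength S ψ : ℝ))) :
    Summable fun ψ : Γ => Real.exp (-s * (wordLength S (p * ψ) : ℝ)) :=
  (Equiv.mulLeft p).summable_iff.mpr hsum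

end wordLength

section deltaP

variable {Γ X : Type*} [Group Γ] [MetricSpace X] [MulAction Γ X] (S : Set Γ) (s : ℝ)

@[simp]
lemma deltaP_self (p : Γ) (x : X) : deltaP S s p x x = 0 := by
  simp [deltaP]

lemma summable_deltaP [BoundedSpace X] (p : Γ) (x y : X)
    (hsum : Summable fun ψ : Γ => Real.exp (-s * (wordLength S ψ : ℝ))) :
    Summable fun ψ : Γ =>
      Real.exp (-s * (wordLength S (p⁻¹ * ψ) : ℝ)) * dist (ψ⁻¹ • x) (ψ⁻¹ • y) :=
  ((summable_exp_wordLength_mul_left S s p⁻¹ hsum).mul_right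
    (diam (Set.univ : Set X))).of_nonneg_of_le (fun ψ => by positivity)
    fun ψ => by gcongr; exact dist_le_diam_univ _ _

lemma dist_le_deltaP_one [BoundedSpace X]
    (hsum : Summable fun ψ : Γ => Real.exp (-s * (wordLength S ψ : ℝ))) (x y : X) :
    dist x y ≤ deltaP S s 1 x y := by
  have hterm := (summable_deltaP S s 1 x y hsum).le_tsum 1 fun ψ _ => by positivity
  simpa [deltaP, wordLength_one] using hterm

lemma continuous_deltaP [BoundedSpace X] (hcont : ∀ γ : Γ, Continuous fun x : X => γ • x)
    (hsum : Summable fun ψ : Γ => Real.exp (-s * (wordLength S ψ : ℝ))) (p : Γ) (x : X) :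
    Continuous (deltaP S s p x) := by
  refine continuous_tsum (fun ψ => continuous_const.mul (continuous_const.dist (hcont ψ⁻¹)))
    ((summable_exp_wordLength_mul_left S s p⁻¹ hsum).mul_right (diam (Set.univ : Set X)))
    fun ψ y => ?_
  rw [Real.norm_of_nonneg (by positivity)]
  gcongr
  exact dist_le_diam_univ _ _

end deltaP

theorem deltaE_same_topology_general {Γ X : Type*} [Group Γ]
    (S : Finset Γ)
    [MetricSpace X] [CompactSpace X] [MulAction Γ X]
    (hcont : ∀ γ : Γ, Continuous fun x : X => γ • x)
    (s : ℝ)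
    (hsum : Summable fun ψ : Γ => Real.exp (-s * (wordLength (S : Set Γ) ψ : ℝ))) :
    (∀ x y : X, dist x y ≤ deltaP (S : Set Γ) s 1 x y) ∧
    (∀ (x : X) (ε : ℝ), 0 < ε → ∃ r > 0, ∀ y : X,
      dist x y < r → deltaP (S : Set Γ) s 1 x y < ε) ∧
    (∀ (x : X) (ε : ℝ), 0 < ε → ∃ r > 0, ∀ y : X,
      deltaP (S : Set Γ) s 1 x y < r → dist x y < ε) := by
  have hdist := dist_le_deltaP_one (S : Set Γ) s hsum (X := X)
  refine ⟨hdist, fun x ε hε => ?_, fun x ε hε => ⟨ε, hε, fun y hy => (hdist x y).trans_lt hy⟩⟩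
  obtain ⟨r, hr, hball⟩ :=
    Metric.continuous_iff.mp (continuous_deltaP (S : Set Γ) s hcont hsum 1 x) x ε hε
  refine ⟨r, hr, fun y hxy => ?_⟩
  simpa [Real.dist_eq] using (abs_lt.mp (hball y (by rwa [dist_comm]))).2

/-- The metric `δ_e` dominates `δ̂` (so the identity `(X,δ_e) → (X,δ̂)` is
`1`-Lipschitz) and induces the same topology on `X` as `δ̂`: the identity map
is continuous in both directions, expressed in `ε`-`δ` form. -/
theorem deltaE_same_topology {Γ X : Type*} [Group Γ]
    (S : Finset Γ) (hsym : ∀ x ∈ S, x⁻¹ ∈ S)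
    (hgen : Subgroup.closure (S : Set Γ) = ⊤)
    [MetricSpace X] [CompactSpace X] [MulAction Γ X]
    (hcont : ∀ γ : Γ, Continuous fun x : X => γ • x)
    (s : ℝ) (hs : 0 < s)
    (hsum : Summable fun ψ : Γ => Real.exp (-s * (wordLength (S : Set Γ) ψ : ℝ))) :
    (∀ x y : X, dist x y ≤ deltaP (S : Set Γ) s 1 x y) ∧
    (∀ (x : X) (ε : ℝ), 0 < ε → ∃ r > 0, ∀ y : X,
      dist x y < r → deltaP (S : Set Γ) s 1 x y < ε) ∧
    (∀ (x : X) (ε : ℝ), 0 < ε → ∃ r > 0, ∀ y : X,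
      deltaP (S : Set Γ) s 1 x y < r → dist x y < ε) :=
  deltaE_same_topology_general S hcont s hsum
end

section
/- Let Γ be a group with a finite symmetric generating set S, word length |·|_S, and word metric d_S. Let (X, δ̂) be a compact metric space on which Γ acts by homeomorphisms, and suppose L ≥ 1 is such that every element ψ ∈ Γ acts on (X, δ̂) as an L^{|ψ|_S}-bi-Lipschitz map. Let s > 0 and u > 0 satisfy e^{−s}·L ≤ e^{−u} and suppose ∑_{ψ∈Γ} e^{−u·|ψ|_S} converges to a value K. Then ∑_{ψ∈Γ} e^{−s·|ψ|_S} converges, and the metric δ_e(x,y) = ∑_{ψ∈Γ} e^{−s·|ψ|_S}·δ̂(ψ⁻¹x, ψ⁻¹y) satisfies δ̂(x,y) ≤ δ_e(x,y) ≤ K·δ̂(x,y) for all x,y ∈ X; in particular δ_e is bi-Lipschitz equivalent to δ̂. -/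
open Real

lemma wordLength_one_s10 {Γ : Type*} [Group Γ] (S : Set Γ) : wordLength S 1 = 0 :=
  Nat.sInf_eq_zero.mpr (Or.inl ⟨[], by simp⟩)

lemma dist_inv_smul_le_of_inv_mul_le_dist_smul {Γ X : Type*} [Group Γ] [PseudoMetricSpace X]
    [MulAction Γ X] {ψ : Γ} {C : ℝ} (hC : 0 < C)
    (h : ∀ x y : X, C⁻¹ * dist x y ≤ dist (ψ • x) (ψ • y)) (x y : X) :
    dist (ψ⁻¹ • x) (ψ⁻¹ • y) ≤ C * dist x y := by
  have := h (ψ⁻¹ • x) (ψ⁻¹ • y)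
  rwa [smul_inv_smul, smul_inv_smul, inv_mul_le_iff₀ hC] at this

section ExpBounds

variable {s u L : ℝ}

lemma exp_neg_mul_mul_pow_le (hL : 0 ≤ L) (hsu : exp (-s) * L ≤ exp (-u)) (n : ℕ) :
    exp (-s * n) * L ^ n ≤ exp (-u * n) :=
  calc exp (-s * n) * L ^ n = (exp (-s) * L) ^ n := by rw [mul_pow, ← exp_nat_mul]; ring_nf
    _ ≤ exp (-u) ^ n := pow_le_pow_left₀ (by positivity) hsu n
    _ = exp (-u * n) := by rw [← exp_nat_mul]; ring_nf

lemma exp_neg_mul_le_of_one_le (hL : 1 ≤ L) (hsu : exp (-s) * L ≤ exp (-u)) (n : ℕ) :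
    exp (-s * n) ≤ exp (-u * n) :=
  (le_mul_of_one_le_right (exp_pos _).le (one_le_pow₀ hL)).trans
    (exp_neg_mul_mul_pow_le (zero_le_one.trans hL) hsu n)

end ExpBounds

section DeltaP

variable {Γ X : Type*} [Group Γ] [MetricSpace X] [MulAction Γ X] {S : Set Γ} {L s u : ℝ}

lemma deltaP_one_eq (S : Set Γ) (s : ℝ) (x y : X) :
    deltaP S s 1 x y = ∑' ψ : Γ, exp (-s * wordLength S ψ) * dist (ψ⁻¹ • x) (ψ⁻¹ • y) := by
  simp only [deltaP, inv_one, one_mul]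

lemma exp_mul_dist_inv_smul_le (hL : 0 < L)
    (hbl : ∀ (ψ : Γ) (x y : X), (L ^ wordLength S ψ)⁻¹ * dist x y ≤ dist (ψ • x) (ψ • y))
    (hsu : exp (-s) * L ≤ exp (-u)) (ψ : Γ) (x y : X) :
    exp (-s * wordLength S ψ) * dist (ψ⁻¹ • x) (ψ⁻¹ • y) ≤ exp (-u * wordLength S ψ) * dist x y :=
  calc exp (-s * wordLength S ψ) * dist (ψ⁻¹ • x) (ψ⁻¹ • y)
      ≤ exp (-s * wordLength S ψ) * (L ^ wordLength S ψ * dist x y) :=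
        mul_le_mul_of_nonneg_left
          (dist_inv_smul_le_of_inv_mul_le_dist_smul (by positivity) (hbl ψ) x y) (exp_pos _).le
    _ = exp (-s * wordLength S ψ) * L ^ wordLength S ψ * dist x y := by ring
    _ ≤ exp (-u * wordLength S ψ) * dist x y :=
        mul_le_mul_of_nonneg_right (exp_neg_mul_mul_pow_le hL.le hsu _) dist_nonneg

lemma dist_le_deltaP_one_and_deltaP_one_le (hL : 0 < L)
    (hbl : ∀ (ψ : Γ) (x y : X), (L ^ wordLength S ψ)⁻¹ * dist x y ≤ dist (ψ • x) (ψ • y))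
    (hsu : exp (-s) * L ≤ exp (-u)) {K : ℝ}
    (hK : HasSum (fun ψ : Γ => exp (-u * wordLength S ψ)) K) (x y : X) :
    dist x y ≤ deltaP S s 1 x y ∧ deltaP S s 1 x y ≤ K * dist x y := by
  have hnonneg (ψ : Γ) : 0 ≤ exp (-s * wordLength S ψ) * dist (ψ⁻¹ • x) (ψ⁻¹ • y) := by
    positivity
  have hle (ψ : Γ) := exp_mul_dist_inv_smul_le hL hbl hsu ψ x y
  have hdom := hK.mul_right (dist x y)
  have hsummable := hdom.summable.of_nonneg_of_le hnonneg hle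
  rw [deltaP_one_eq]
  refine ⟨?_, hasSum_le hle hsummable.hasSum hdom⟩
  simpa [wordLength_one_s10] using hsummable.le_tsum 1 fun ψ _ => hnonneg ψ

end DeltaP

theorem deltaE_biLipschitz_to_base_general {Γ X : Type*} [Group Γ]
    (S : Finset Γ)
    [MetricSpace X] [MulAction Γ X]
    (L : ℝ) (hL : 1 ≤ L)
    (hbl : ∀ (ψ : Γ) (x y : X),
      (L ^ wordLength (S : Set Γ) ψ)⁻¹ * dist x y ≤ dist (ψ • x) (ψ • y) ∧
      dist (ψ • x) (ψ • y) ≤ L ^ wordLength (S : Set Γ) ψ * dist x y)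
    (s u : ℝ)
    (hsu : Real.exp (-s) * L ≤ Real.exp (-u)) (K : ℝ)
    (hK : HasSum (fun ψ : Γ => Real.exp (-u * (wordLength (S : Set Γ) ψ : ℝ))) K) :
    (Summable fun ψ : Γ => Real.exp (-s * (wordLength (S : Set Γ) ψ : ℝ))) ∧
    ∀ x y : X,
      dist x y ≤ deltaP (S : Set Γ) s 1 x y ∧
      deltaP (S : Set Γ) s 1 x y ≤ K * dist x y :=
  ⟨hK.summable.of_nonneg_of_le (fun _ => (exp_pos _).le)
      (fun _ => exp_neg_mul_le_of_one_le hL hsu _),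
    dist_le_deltaP_one_and_deltaP_one_le (one_pos.trans_le hL) (fun ψ x y => (hbl ψ x y).1)
      hsu hK⟩

/-- If `Γ` acts on `(X, δ̂)` by bi-Lipschitz maps, every `ψ` being
`L^{|ψ|_S}`-bi-Lipschitz, and `s, u > 0` satisfy `e^{-s} L ≤ e^{-u}` with
`∑_{ψ} e^{-u |ψ|_S} = K` convergent, then `∑_{ψ} e^{-s |ψ|_S}` converges and
`δ̂ ≤ δ_e ≤ K δ̂`; in particular `δ_e` is bi-Lipschitz equivalent to `δ̂`. -/
theorem deltaE_biLipschitz_to_base {Γ X : Type*} [Group Γ]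
    (S : Finset Γ) (hsym : ∀ x ∈ S, x⁻¹ ∈ S)
    (hgen : Subgroup.closure (S : Set Γ) = ⊤)
    [MetricSpace X] [CompactSpace X] [MulAction Γ X]
    (hcont : ∀ γ : Γ, Continuous fun x : X => γ • x)
    (L : ℝ) (hL : 1 ≤ L)
    (hbl : ∀ (ψ : Γ) (x y : X),
      (L ^ wordLength (S : Set Γ) ψ)⁻¹ * dist x y ≤ dist (ψ • x) (ψ • y) ∧
      dist (ψ • x) (ψ • y) ≤ L ^ wordLength (S : Set Γ) ψ * dist x y)
    (s u : ℝ) (hs : 0 < s) (hu : 0 < u)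
    (hsu : Real.exp (-s) * L ≤ Real.exp (-u)) (K : ℝ)
    (hK : HasSum (fun ψ : Γ => Real.exp (-u * (wordLength (S : Set Γ) ψ : ℝ))) K) :
    (Summable fun ψ : Γ => Real.exp (-s * (wordLength (S : Set Γ) ψ : ℝ))) ∧
    ∀ x y : X,
      dist x y ≤ deltaP (S : Set Γ) s 1 x y ∧
      deltaP (S : Set Γ) s 1 x y ≤ K * dist x y :=
  deltaE_biLipschitz_to_base_general S L hL hbl s u hsu K hK
end
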